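/- arXiv:math/0509257 — 4 statements merged into one kernel-verified Lean document; each statement's English description precedes it below -/
import Mathlib

section
/- Sector condition: if Γ = (V,q) is centered for m with cycle lengths bounded by C_0, then there exists a constant M depending only on C_0 such that for all finitely supported functions f, g on V, E(f,g)² ≤ M² E(f,f) E(g,g), where E(f,g) = Σ_{x,y∈V} m(x)q(x,y)g(x)(f(x)-f(y)). -/
open scoped Classical

/-- The edge `(a,b)` belongs to the cycle with vertices `x 0, x 1, ..., x k` (where `x k = x 0`). -/
def IsEdge {V : Type*} (k : ℕ) (x : ℕ → V) (a b : V) : Prop :=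
  ∃ j, j < k ∧ x j = a ∧ x (j + 1) = b

/-- The graph `Γ = (V,q)` is centered for the measure `m`, witnessed by the family of
edge self-avoiding closed cycles `γ i = (vert i 0, ..., vert i (len i))` with positive
weights `w i` and uniform length bound `C0`, so that
`m x * q x y = ∑' i, w i · 1_{(x,y) ∈ γ i}`. -/
def Centered {V : Type*} (q : V → V → ℝ) (m : V → ℝ)
    (len : ℕ → ℕ) (vert : ℕ → ℕ → V) (w : ℕ → ℝ) (C0 : ℕ) : Prop :=
  (∀ i, 1 ≤ len i ∧ len i ≤ C0) ∧
  (∀ i, vert i (len i) = vert i 0) ∧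
  (∀ i j, j < len i → 0 < q (vert i j) (vert i (j + 1))) ∧
  (∀ i j j', j < len i → j' < len i →
      vert i j = vert i j' → vert i (j + 1) = vert i (j' + 1) → j = j') ∧
  (∀ i, 0 < w i) ∧
  (∀ x y, m x * q x y = ∑' i, if IsEdge (len i) (vert i) x y then w i else 0)


/-- The Dirichlet form `E(f,g) = ∑_{x,y} m(x) q(x,y) g(x) (f(x) - f(y))`. -/
noncomputable def dirichlet {V : Type*} (q : V → V → ℝ) (m : V → ℝ) (f g : V → ℝ) : ℝ :=
  ∑' p : V × V, m p.1 * q p.1 p.2 * g p.1 * (f p.1 - f p.2)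

/-!
Each edge term of the Dirichlet form is spread over the cycles through that edge, so
`E(f,g) = ∑ᵢ wᵢ Eᵢ(f,g)`, where `Eᵢ(f,g) = ∑ⱼ g(xⱼ)(f(xⱼ) - f(xⱼ₊₁))` is the form of the
discrete circle `x₀, …, xₙ = x₀` traced by the `i`-th cycle. On such a circle
`2 Eᵢ(f,f) = ∑ⱼ (f(xⱼ) - f(xⱼ₊₁))²`, and since the increments of `f` sum to zero,
`Eᵢ(f,g) = ∑ⱼ (g(xⱼ) - g(x₀))(f(xⱼ) - f(xⱼ₊₁))`. Cauchy–Schwarz and the Poincaré inequality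
`(g(xⱼ) - g(x₀))² ≤ n ∑ₖ (g(xₖ) - g(xₖ₊₁))²` give `Eᵢ(f,g)² ≤ (2n)² Eᵢ(f,f) Eᵢ(g,g)`, and
Cauchy–Schwarz over the cycles gives the theorem with `M = 2 C0`.

Cycles through a vertex of zero mass have to be discarded. Since every cycle carries as much
weight into a vertex as out of it, a cycle lies either entirely inside or entirely outside the
zero set of `m`.
-/

open Finset
open scoped ENNReal

section CycleForm

noncomputable def cycleForm (n : ℕ) (a b : ℕ → ℝ) : ℝ :=
  ∑ j ∈ range n, b j * (a j - a (j + 1))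

variable {n : ℕ} {a b : ℕ → ℝ}

lemma two_mul_cycleForm_self (ha : a n = a 0) :
    2 * cycleForm n a a = ∑ j ∈ range n, (a j - a (j + 1)) ^ 2 := by
  have htel : ∑ j ∈ range n, (a j ^ 2 - a (j + 1) ^ 2) = 0 := by
    rw [sum_range_sub' (fun j => a j ^ 2), ha, sub_self]
  rw [cycleForm, mul_sum, ← sub_zero (∑ j ∈ range n, _), ← htel, ← sum_sub_distrib]
  exact sum_congr rfl fun j _ => by ring

lemma cycleForm_self_nonneg (ha : a n = a 0) : 0 ≤ cycleForm n a a := by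
  have := two_mul_cycleForm_self ha
  have : 0 ≤ ∑ j ∈ range n, (a j - a (j + 1)) ^ 2 := sum_nonneg fun j _ => sq_nonneg _
  linarith

lemma sq_sub_le_mul_sum_sq {j : ℕ} (hj : j ≤ n) :
    (b j - b 0) ^ 2 ≤ n * ∑ k ∈ range n, (b k - b (k + 1)) ^ 2 :=
  calc (b j - b 0) ^ 2 = (∑ k ∈ range j, (b k - b (k + 1))) ^ 2 := by
        rw [sum_range_sub']; ring
    _ ≤ j * ∑ k ∈ range j, (b k - b (k + 1)) ^ 2 := by
        simpa using sq_sum_le_card_mul_sum_sq (s := range j) (f := fun k => b k - b (k + 1))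
    _ ≤ n * ∑ k ∈ range n, (b k - b (k + 1)) ^ 2 := by
        gcongr

lemma cycleForm_sq_le (ha : a n = a 0) (hb : b n = b 0) :
    cycleForm n a b ^ 2 ≤ (2 * n) ^ 2 * (cycleForm n a a * cycleForm n b b) := by
  have hshift : cycleForm n a b = ∑ j ∈ range n, (b j - b 0) * (a j - a (j + 1)) := by
    have : ∑ j ∈ range n, (a j - a (j + 1)) = 0 := by rw [sum_range_sub', ha, sub_self]
    simp only [cycleForm, sub_mul, sum_sub_distrib, ← mul_sum, this, mul_zero, sub_zero]
  have hpoinc : ∑ j ∈ range n, (b j - b 0) ^ 2 ≤ n ^ 2 * ∑ k ∈ range n, (b k - b (k + 1)) ^ 2 :=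
    calc ∑ j ∈ range n, (b j - b 0) ^ 2
        ≤ ∑ _j ∈ range n, n * ∑ k ∈ range n, (b k - b (k + 1)) ^ 2 :=
          sum_le_sum fun j hj => sq_sub_le_mul_sum_sq (mem_range.mp hj).le
      _ = n ^ 2 * ∑ k ∈ range n, (b k - b (k + 1)) ^ 2 := by
          rw [sum_const, card_range, nsmul_eq_mul]; ring
  calc cycleForm n a b ^ 2
      ≤ (∑ j ∈ range n, (b j - b 0) ^ 2) * ∑ j ∈ range n, (a j - a (j + 1)) ^ 2 := by
        rw [hshift]; exact sum_mul_sq_le_sq_mul_sq _ _ _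
    _ ≤ (n ^ 2 * ∑ k ∈ range n, (b k - b (k + 1)) ^ 2) *
          ∑ j ∈ range n, (a j - a (j + 1)) ^ 2 := by
        gcongr
    _ = (2 * n) ^ 2 * (cycleForm n a a * cycleForm n b b) := by
        rw [← two_mul_cycleForm_self ha, ← two_mul_cycleForm_self hb]; ring

lemma sq_mul_cycleForm_le {N : ℕ} (c : ℝ) (hN : n ≤ N) (ha : a n = a 0) (hb : b n = b 0) :
    (c * cycleForm n a b) ^ 2 ≤ (2 * N) ^ 2 * (c * cycleForm n a a * (c * cycleForm n b b)) := by
  have := cycleForm_self_nonneg ha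
  have := cycleForm_self_nonneg hb
  calc (c * cycleForm n a b) ^ 2
      ≤ c ^ 2 * ((2 * n) ^ 2 * (cycleForm n a a * cycleForm n b b)) := by
        rw [mul_pow]
        gcongr
        exact cycleForm_sq_le ha hb
    _ ≤ c ^ 2 * ((2 * N) ^ 2 * (cycleForm n a a * cycleForm n b b)) := by gcongr
    _ = (2 * N) ^ 2 * (c * cycleForm n a a * (c * cycleForm n b b)) := by ring

end CycleForm

lemma sq_le_of_hasSum_of_sq_le {ι : Type*} {u v w : ι → ℝ} {a b c K : ℝ} (hK : 0 ≤ K)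
    (hv : ∀ i, 0 ≤ v i) (hw : ∀ i, 0 ≤ w i) (hu : HasSum u c) (hva : HasSum v a)
    (hwb : HasSum w b) (huvw : ∀ i, u i ^ 2 ≤ K ^ 2 * (v i * w i)) :
    c ^ 2 ≤ K ^ 2 * (a * b) := by
  have ha : 0 ≤ a := hva.nonneg hv
  have hb : 0 ≤ b := hwb.nonneg hw
  have hrpow {x : ℝ} (hx : 0 ≤ x) : √x ^ (2 : ℝ) = x := by
    rw [Real.rpow_two, Real.sq_sqrt hx]
  obtain ⟨C, -, hCab, hC⟩ := Real.inner_le_Lp_mul_Lq_hasSum_of_nonneg Real.HolderConjugate.two_two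
    (Real.sqrt_nonneg a) (Real.sqrt_nonneg b) (fun i => Real.sqrt_nonneg (v i))
    (fun i => Real.sqrt_nonneg (w i)) (by simpa only [hrpow (hv _), hrpow ha] using hva)
    (by simpa only [hrpow (hw _), hrpow hb] using hwb)
  have hpt : ∀ i, |u i| ≤ K * (√(v i) * √(w i)) := fun i => by
    simpa [Real.sqrt_mul' _ (hw i), Real.sqrt_mul (sq_nonneg K), Real.sqrt_sq hK, ← mul_assoc]
      using Real.abs_le_sqrt (huvw i)
  have hc : |c| ≤ K * (√a * √b) :=
    calc |c| ≤ ∑' i, |u i| := by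
          simpa only [hu.tsum_eq, Real.norm_eq_abs] using norm_tsum_le_tsum_norm hu.summable.norm
      _ ≤ K * C := hasSum_le hpt hu.summable.abs.hasSum (hC.mul_left K)
      _ ≤ K * (√a * √b) := by gcongr
  calc c ^ 2 = |c| ^ 2 := (sq_abs c).symm
    _ ≤ (K * (√a * √b)) ^ 2 := by gcongr
    _ = K ^ 2 * (a * b) := by rw [mul_pow, mul_pow, Real.sq_sqrt ha, Real.sq_sqrt hb]

lemma hasSum_tsum_mul_of_hasSum {ι α : Type*} {φ : ι → α → ℝ} {k h : α → ℝ}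
    (hφ : ∀ i x, 0 ≤ φ i x) (hk : ∀ x, HasSum (φ · x) (k x))
    (hkh : Summable fun x => k x * |h x|) :
    HasSum (fun i => ∑' x, φ i x * h x) (∑' x, k x * h x) := by
  set F : α × ι → ℝ := fun p => φ p.2 p.1 * h p.1
  have hF : Summable F := by
    refine Summable.of_abs ((summable_prod_of_nonneg fun p => abs_nonneg (F p)).mpr ⟨?_, ?_⟩)
    all_goals simp only [F, abs_mul, abs_of_nonneg (hφ _ _)]
    · exact fun x => ((hk x).mul_right _).summable
    · simpa only [((hk _).mul_right _).tsum_eq] using hkh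
  have hrows : HasSum (fun x => k x * h x) (∑' p, F p) :=
    hF.hasSum.prod_fiberwise fun x => (hk x).mul_right (h x)
  have hF' : Summable (F ∘ Equiv.prodComm ι α) := (Equiv.summable_iff _).mpr hF
  rw [hrows.tsum_eq, ← Equiv.tsum_eq (Equiv.prodComm ι α)]
  exact hF'.hasSum.prod_fiberwise fun i => (hF'.prod_factor i).hasSum

lemma summable_of_tsum_ne_zero {ι α : Type*} [AddCommMonoid α] [TopologicalSpace α] {f : ι → α}
    (h : ∑' i, f i ≠ 0) : Summable f := by
  by_contra hns
  exact h (tsum_eq_zero_of_not_summable hns)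

lemma summable_mul_of_tsum_eq_one {V : Type*} {q : V → V → ℝ} (hq0 : ∀ x y, 0 ≤ q x y)
    (hq1 : ∀ x, ∑' y, q x y = 1) {φ : V → ℝ} (hφ0 : ∀ x, 0 ≤ φ x)
    (hφ : (Function.support φ).Finite) :
    Summable fun p : V × V => φ p.1 * q p.1 p.2 := by
  refine (summable_prod_of_nonneg fun p => mul_nonneg (hφ0 _) (hq0 _ _)).mpr ⟨fun x => ?_, ?_⟩
  · exact (summable_of_tsum_ne_zero (f := q x) (by simp [hq1 x])).mul_left (φ x)
  · simp only [tsum_mul_left, hq1, mul_one]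
    exact summable_of_hasFiniteSupport hφ

lemma exists_abs_le_of_support_finite {V : Type*} {f : V → ℝ} (hf : (Function.support f).Finite) :
    ∃ B, ∀ x, |f x| ≤ B := by
  refine ⟨∑ x ∈ hf.toFinset, |f x|, fun x => ?_⟩
  by_cases hx : f x = 0
  · simpa [hx] using sum_nonneg fun y _ => abs_nonneg (f y)
  · exact single_le_sum (fun y _ => abs_nonneg (f y)) (hf.mem_toFinset.mpr hx)

lemma summable_dirichlet_abs {V : Type*} {q : V → V → ℝ} {m : V → ℝ} (hq0 : ∀ x y, 0 ≤ q x y)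
    (hq1 : ∀ x, ∑' y, q x y = 1) (hm : ∀ x, 0 ≤ m x) {f g : V → ℝ}
    (hf : (Function.support f).Finite) (hg : (Function.support g).Finite) :
    Summable fun p : V × V => m p.1 * q p.1 p.2 * |g p.1 * (f p.1 - f p.2)| := by
  obtain ⟨B, hB⟩ := exists_abs_le_of_support_finite hf
  have hφ : (Function.support fun x => 2 * B * |g x| * m x).Finite :=
    hg.subset fun x hx => by simp_all
  refine (summable_mul_of_tsum_eq_one hq0 hq1 (fun x => ?_) hφ).of_nonneg_of_le
    (fun p => mul_nonneg (mul_nonneg (hm _) (hq0 _ _)) (abs_nonneg _)) fun p => ?_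
  · have hB0 := (abs_nonneg (f x)).trans (hB x)
    exact mul_nonneg (mul_nonneg (by linarith) (abs_nonneg _)) (hm x)
  · have hinc : |f p.1 - f p.2| ≤ 2 * B := by
      linarith [abs_sub (f p.1) (f p.2), hB p.1, hB p.2]
    rw [abs_mul]
    calc m p.1 * q p.1 p.2 * (|g p.1| * |f p.1 - f p.2|)
        ≤ m p.1 * q p.1 p.2 * (|g p.1| * (2 * B)) := by
          gcongr
          exact mul_nonneg (hm _) (hq0 _ _)
      _ = 2 * B * |g p.1| * m p.1 * q p.1 p.2 := by ring

section Cycle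

variable {V : Type*} {n : ℕ} {x : ℕ → V}

lemma card_filter_succ_eq (hcl : x n = x 0) (v : V) :
    #{j ∈ range n | x (j + 1) = v} = #{j ∈ range n | x j = v} := by
  have h1 := sum_range_succ (fun j => if x j = v then 1 else 0) n
  have h2 := sum_range_succ' (fun j => if x j = v then 1 else 0) n
  simp only [card_filter, hcl] at h1 h2 ⊢
  omega

lemma tsum_ite_mem_image {ι : Type*} {s : Finset ι} {φ : ι → V} (hφ : Set.InjOn φ s)
    (c : ℝ≥0∞) : ∑' z, (if z ∈ s.image φ then c else 0) = #s * c := by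
  rw [tsum_eq_sum (s := s.image φ) fun z hz => if_neg hz, sum_ite_mem, inter_self,
    sum_const, card_image_of_injOn hφ, nsmul_eq_mul]

variable (hinj : ∀ j j', j < n → j' < n → x j = x j' → x (j + 1) = x (j' + 1) → j = j')
include hinj

lemma tsum_ite_isEdge_left (c : ℝ≥0∞) (y : V) :
    ∑' z, (if IsEdge n x z y then c else 0) = #{j ∈ range n | x (j + 1) = y} * c := by
  rw [← tsum_ite_mem_image (φ := x) ?_ c]
  · refine tsum_congr fun z => if_congr ?_ rfl rfl
    simp only [IsEdge, mem_image, mem_filter, mem_range]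
    exact exists_congr fun j => by tauto
  · intro j hj j' hj' he
    simp only [coe_filter, mem_range, Set.mem_ofPred_eq] at hj hj'
    exact hinj j j' hj.1 hj'.1 he (hj.2.trans hj'.2.symm)

lemma tsum_ite_isEdge_right (c : ℝ≥0∞) (y : V) :
    ∑' z, (if IsEdge n x y z then c else 0) = #{j ∈ range n | x j = y} * c := by
  rw [← tsum_ite_mem_image (φ := fun j => x (j + 1)) ?_ c]
  · refine tsum_congr fun z => if_congr ?_ rfl rfl
    simp only [IsEdge, mem_image, mem_filter, mem_range]
    exact exists_congr fun j => by tauto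
  · intro j hj j' hj' he
    simp only [coe_filter, mem_range, Set.mem_ofPred_eq] at hj hj'
    exact hinj j j' hj.1 hj'.1 (hj.2.trans hj'.2.symm) he

lemma tsum_ite_isEdge_mul (c : ℝ) (h : V × V → ℝ) :
    ∑' p : V × V, (if IsEdge n x p.1 p.2 then c else 0) * h p
      = c * ∑ j ∈ range n, h (x j, x (j + 1)) := by
  have hφ : Set.InjOn (fun j => (x j, x (j + 1))) (range n) := fun j hj j' hj' he =>
    hinj j j' (mem_range.mp hj) (mem_range.mp hj') (Prod.ext_iff.mp he).1 (Prod.ext_iff.mp he).2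
  have hedge (p : V × V) : IsEdge n x p.1 p.2 ↔ p ∈ (range n).image fun j => (x j, x (j + 1)) := by
    simp only [IsEdge, mem_image, mem_range, Prod.ext_iff]
  simp_rw [hedge, ite_mul, zero_mul]
  rw [tsum_eq_sum (s := (range n).image _) fun p hp => if_neg hp, sum_ite_mem, inter_self,
    sum_image hφ, mul_sum]

end Cycle

/-- On a cycle through a vertex of zero mass the series in `Centered` may diverge (its `tsum` is
then the junk value `0`), so such cycles get weight `0`. -/
noncomputable def activeWeight {V : Type*} (m : V → ℝ) (vert : ℕ → ℕ → V) (w : ℕ → ℝ)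
    (i : ℕ) : ℝ :=
  if m (vert i 0) = 0 then 0 else w i

noncomputable def edgeWeight {V : Type*} (len : ℕ → ℕ) (vert : ℕ → ℕ → V) (w : ℕ → ℝ)
    (x y : V) : ℝ≥0∞ :=
  ∑' i, if IsEdge (len i) (vert i) x y then ENNReal.ofReal (w i) else 0

namespace Centered

variable {V : Type*} {q : V → V → ℝ} {m : V → ℝ} {len : ℕ → ℕ} {vert : ℕ → ℕ → V}
  {w : ℕ → ℝ} {C0 : ℕ} (hc : Centered q m len vert w C0)
include hc

lemma edgeWeight_toReal (x y : V) : (edgeWeight len vert w x y).toReal = m x * q x y := by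
  obtain ⟨-, -, -, -, hw, hrep⟩ := hc
  rw [hrep, edgeWeight, ENNReal.tsum_toReal_eq fun i => by split <;> simp]
  exact tsum_congr fun i => by split <;> simp [(hw i).le]

lemma activeWeight_nonneg (i : ℕ) : 0 ≤ activeWeight m vert w i := by
  obtain ⟨-, -, -, -, hw, -⟩ := hc
  unfold activeWeight
  split_ifs
  exacts [le_rfl, (hw i).le]

lemma tsum_edgeWeight_left_eq_right (y : V) :
    ∑' z, edgeWeight len vert w z y = ∑' z, edgeWeight len vert w y z := by
  obtain ⟨-, hcl, -, hinj, -, -⟩ := hc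
  simp only [edgeWeight]
  rw [ENNReal.tsum_comm (f := fun z i => if IsEdge (len i) (vert i) z y then _ else _),
    ENNReal.tsum_comm (f := fun z i => if IsEdge (len i) (vert i) y z then _ else _)]
  refine tsum_congr fun i => ?_
  rw [tsum_ite_isEdge_left (hinj i), tsum_ite_isEdge_right (hinj i), card_filter_succ_eq (hcl i)]

lemma edgeWeight_eq_top_iff {x y : V} :
    edgeWeight len vert w x y = ⊤ ↔ m x = 0 ∧ ∃ i, IsEdge (len i) (vert i) x y := by
  have hreal := hc.edgeWeight_toReal x y
  obtain ⟨-, -, hqpos, -, hw, -⟩ := hc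
  have hq_of_edge : (∃ i, IsEdge (len i) (vert i) x y) → 0 < q x y := by
    rintro ⟨i, j, hj, rfl, rfl⟩
    exact hqpos i j hj
  constructor
  · intro htop
    have hedge : ∃ i, IsEdge (len i) (vert i) x y := by
      by_contra! hno
      simp [edgeWeight, hno] at htop
    rw [htop, ENNReal.toReal_top, eq_comm, mul_eq_zero] at hreal
    exact ⟨hreal.resolve_right (hq_of_edge hedge).ne', hedge⟩
  · rintro ⟨hx, i, hi⟩
    by_contra hfin
    have hzero : edgeWeight len vert w x y = 0 := by
      rw [← ENNReal.ofReal_toReal hfin, hreal, hx, zero_mul, ENNReal.ofReal_zero]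
    have hle : ENNReal.ofReal (w i) ≤ edgeWeight len vert w x y := by
      simpa [hi, edgeWeight] using
        ENNReal.le_tsum (f := fun i => if IsEdge (len i) (vert i) x y then _ else _) i
    simp only [hzero, nonpos_iff_eq_zero, ENNReal.ofReal_eq_zero] at hle
    exact (hw i).not_ge hle

section Markov

variable (hq0 : ∀ x y, 0 ≤ q x y) (hq1 : ∀ x, ∑' y, q x y = 1) (hm : ∀ x, 0 ≤ m x)
include hq0 hq1 hm

lemma tsum_edgeWeight_right {y : V} (hy : m y ≠ 0) :
    ∑' z, edgeWeight len vert w y z = ENNReal.ofReal (m y) := by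
  have hfin (z : V) : edgeWeight len vert w y z = ENNReal.ofReal (m y * q y z) := by
    rw [← hc.edgeWeight_toReal, ENNReal.ofReal_toReal]
    exact fun htop => hy (hc.edgeWeight_eq_top_iff.mp htop).1
  have hsum : Summable (q y) := summable_of_tsum_ne_zero (by simp [hq1 y])
  simp_rw [hfin, ENNReal.ofReal_mul (hm y), ENNReal.tsum_mul_left,
    ← ENNReal.ofReal_tsum_of_nonneg (hq0 y) hsum, hq1, ENNReal.ofReal_one, mul_one]

/-- If `m x = 0`, the edge `(x, y)` carries infinite weight, hence so do the inflow at `y` and the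
equal outflow, which is `m y` unless `m y = 0`. -/
lemma measure_eq_zero_of_isEdge {x y : V} {i : ℕ} (hx : m x = 0)
    (he : IsEdge (len i) (vert i) x y) : m y = 0 := by
  by_contra hy
  have hin : ∑' z, edgeWeight len vert w z y = ⊤ :=
    top_le_iff.mp (hc.edgeWeight_eq_top_iff.mpr ⟨hx, i, he⟩ ▸ ENNReal.le_tsum x)
  rw [hc.tsum_edgeWeight_left_eq_right, hc.tsum_edgeWeight_right hq0 hq1 hm hy] at hin
  exact ENNReal.ofReal_ne_top hin

lemma measure_vert_eq_zero_of_le {i j k : ℕ} (hj : m (vert i j) = 0) (hjk : j ≤ k)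
    (hk : k ≤ len i) : m (vert i k) = 0 := by
  induction k, hjk using Nat.le_induction with
  | base => exact hj
  | succ k _ ih =>
    exact hc.measure_eq_zero_of_isEdge hq0 hq1 hm (ih (k.le_succ.trans hk)) ⟨k, hk, rfl, rfl⟩

lemma measure_vert_eq_zero_iff {i j : ℕ} (hj : j ≤ len i) :
    m (vert i j) = 0 ↔ m (vert i 0) = 0 := by
  have hcl : ∀ i, vert i (len i) = vert i 0 := hc.2.1
  refine ⟨fun h => ?_, fun h => hc.measure_vert_eq_zero_of_le hq0 hq1 hm h j.zero_le hj⟩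
  rw [← hcl i]
  exact hc.measure_vert_eq_zero_of_le hq0 hq1 hm h hj le_rfl

lemma hasSum_activeWeight (x y : V) :
    HasSum (fun i => if IsEdge (len i) (vert i) x y then activeWeight m vert w i else 0)
      (m x * q x y) := by
  have hw : ∀ i, 0 < w i := hc.2.2.2.2.1
  have hactive {i : ℕ} (he : IsEdge (len i) (vert i) x y) :
      activeWeight m vert w i = if m x = 0 then 0 else w i := by
    obtain ⟨j, hj, rfl, -⟩ := he
    simp only [activeWeight, hc.measure_vert_eq_zero_iff hq0 hq1 hm hj.le]
  by_cases hx : m x = 0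
  · convert hasSum_zero with i
    · split_ifs with he
      · simp [hactive he, hx]
      · rfl
    · rw [hx, zero_mul]
  · have hfin : edgeWeight len vert w x y ≠ ⊤ := fun htop =>
      hx (hc.edgeWeight_eq_top_iff.mp htop).1
    convert (ENNReal.summable_toReal hfin).hasSum using 1
    · ext i
      split_ifs with he
      · simp [hactive he, hx, (hw i).le]
      · simp
    · rw [← ENNReal.tsum_toReal_eq (fun i => by split <;> simp), ← hc.edgeWeight_toReal,
        edgeWeight]

lemma hasSum_activeWeight_mul_cycleForm {f g : V → ℝ} (hf : (Function.support f).Finite)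
    (hg : (Function.support g).Finite) :
    HasSum (fun i => activeWeight m vert w i * cycleForm (len i) (f ∘ vert i) (g ∘ vert i))
      (dirichlet q m f g) := by
  have hdir :
      dirichlet q m f g = ∑' p : V × V, m p.1 * q p.1 p.2 * (g p.1 * (f p.1 - f p.2)) := by
    simp only [dirichlet, mul_assoc]
  rw [hdir]
  have hnonneg (i : ℕ) (p : V × V) :
      0 ≤ if IsEdge (len i) (vert i) p.1 p.2 then activeWeight m vert w i else 0 := by
    split_ifs
    exacts [hc.activeWeight_nonneg i, le_rfl]
  have hedges := fun p : V × V => hc.hasSum_activeWeight hq0 hq1 hm p.1 p.2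
  have hsum := summable_dirichlet_abs hq0 hq1 hm hf hg
  convert hasSum_tsum_mul_of_hasSum hnonneg hedges hsum using 2 with i
  obtain ⟨-, -, -, hinj, -, -⟩ := hc
  rw [tsum_ite_isEdge_mul (hinj i)]
  rfl

end Markov

end Centered

/-- sector condition. For every cycle-length bound `C0` there is a constant
`M` (depending only on `C0`) such that for every centered graph whose cycles have length
at most `C0` and all finitely supported `f, g`: `E(f,g)² ≤ M² E(f,f) E(g,g)`. -/
theorem sector_condition (C0 : ℕ) :
    ∃ M : ℝ, ∀ (V : Type) (q : V → V → ℝ) (m : V → ℝ)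
      (len : ℕ → ℕ) (vert : ℕ → ℕ → V) (w : ℕ → ℝ),
      (∀ x y, 0 ≤ q x y) → (∀ x, ∑' y, q x y = 1) → (∀ x, 0 ≤ m x) →
      Centered q m len vert w C0 →
      ∀ f g : V → ℝ, (Function.support f).Finite → (Function.support g).Finite →
        (dirichlet q m f g) ^ 2 ≤ M ^ 2 * (dirichlet q m f f * dirichlet q m g g) := by
  refine ⟨2 * C0, fun V q m len vert w hq0 hq1 hm hc f g hf hg => ?_⟩
  have hclosed (a : V → ℝ) (i : ℕ) : (a ∘ vert i) (len i) = (a ∘ vert i) 0 :=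
    congrArg a (hc.2.1 i)
  have hnonneg (a : V → ℝ) (i : ℕ) :
      0 ≤ activeWeight m vert w i * cycleForm (len i) (a ∘ vert i) (a ∘ vert i) :=
    mul_nonneg (hc.activeWeight_nonneg i) (cycleForm_self_nonneg (hclosed a i))
  refine sq_le_of_hasSum_of_sq_le (by positivity) (hnonneg f) (hnonneg g)
    (hc.hasSum_activeWeight_mul_cycleForm hq0 hq1 hm hf hg)
    (hc.hasSum_activeWeight_mul_cycleForm hq0 hq1 hm hf hf)
    (hc.hasSum_activeWeight_mul_cycleForm hq0 hq1 hm hg hg)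
    fun i => sq_mul_cycleForm_le _ (hc.1 i).2 (hclosed f i) (hclosed g i)
end

section
/- Suppose Γ = (V,q) is centered for m with inf_x m(x) > 0, and the Carne–Varopoulos bound holds: P[X_t = y | X_0 = x] ≤ C·e^{-d(x,y)²/(Ct)} for all x,y,t. If the balls have subexponential volume growth, i.e., (1/t)·log V(t) → 0 where V(t) = #{x : d(o,x) ≤ t}, then for every α > 0, P[d(o,X_t) ≥ αt | X_0 = o] → 0 as t → ∞. -/
/-!
For `t ≥ 1` every point at distance at least `α t` from `o` carries mass at most
`C exp(-α² t / C)` by the Carne–Varopoulos bound, and only the `V(t)` points of the ball of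
radius `t` carry mass at all. Hence the escape probability is at most
`C · V(t) · exp(-α² t / C) ≤ C · exp(t (log V(t) / t - α² / C))`, which tends to `0` because
`log V(t) / t → 0`.
-/

open Filter Topology

lemma neg_sq_div_mul_le_of_mul_le {C t α r : ℝ} (hC : 0 < C) (ht : 0 < t) (hα : 0 ≤ α)
    (h : α * t ≤ r) : -r ^ 2 / (C * t) ≤ -(α ^ 2 * t / C) := by
  rw [neg_div, neg_le_neg_iff]
  calc α ^ 2 * t / C = (α * t) ^ 2 / (C * t) := by field_simp
    _ ≤ r ^ 2 / (C * t) := by gcongr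

lemma tsum_ite_le_card_ball_mul {V : Type*} (r : V → ℕ) (p : V → ℝ) (t : ℕ) (P : V → Prop)
    [DecidablePred P] (hsupp : ∀ x, p x ≠ 0 → r x ≤ t) (hball : {x | r x ≤ t}.Finite)
    {B : ℝ} (hB : 0 ≤ B) (hpB : ∀ x, P x → p x ≤ B) :
    ∑' x, (if P x then p x else 0) ≤ Nat.card {x | r x ≤ t} * B := by
  have hzero : ∀ x ∉ hball.toFinset, (if P x then p x else 0) = 0 := by
    intro x hx
    have hp : p x = 0 := by
      by_contra hp
      exact hx (hball.mem_toFinset.mpr (hsupp x hp))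
    simp [hp]
  rw [tsum_eq_sum hzero, Nat.card_coe_set_eq, Set.ncard_eq_toFinset_card _ hball, ← nsmul_eq_mul]
  refine Finset.sum_le_card_nsmul _ _ _ fun x _ => ?_
  split_ifs with hx
  exacts [hpB x hx, hB]

lemma tendsto_mul_exp_neg_mul_of_log_div_tendsto_zero {u : ℕ → ℝ} (hu : ∀ t, 0 ≤ u t)
    (hgrowth : Tendsto (fun t : ℕ => Real.log (u t) / t) atTop (𝓝 0)) {c : ℝ} (hc : 0 < c) :
    Tendsto (fun t : ℕ => u t * Real.exp (-(c * t))) atTop (𝓝 0) := by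
  have hexponent : Tendsto (fun t : ℕ => (t : ℝ) * (Real.log (u t) / t - c)) atTop atBot := by
    refine tendsto_natCast_atTop_atTop.atTop_mul_neg (neg_lt_zero.mpr hc) ?_
    simpa using hgrowth.sub_const c
  refine tendsto_of_tendsto_of_tendsto_of_le_of_le' tendsto_const_nhds
    (Real.tendsto_exp_atBot.comp hexponent) (Eventually.of_forall fun t => by positivity [hu t]) ?_
  filter_upwards [eventually_ge_atTop 1] with t ht
  have ht' : (t : ℝ) ≠ 0 := by positivity
  calc u t * Real.exp (-(c * t)) ≤ Real.exp (Real.log (u t)) * Real.exp (-(c * t)) := by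
        gcongr; exact Real.le_exp_log _
    _ = Real.exp (t * (Real.log (u t) / t - c)) := by
        rw [← Real.exp_add]; congr 1; field_simp; ring

theorem escape_rate_subexponential_growth_general {V : Type*}
    (d : V → V → ℕ) (o : V) (μ : ℕ → V → ℝ) (C : ℝ) (hC : 0 < C)
    (hμpos : ∀ t x, 0 ≤ μ t x)
    (hsupp : ∀ t x, μ t x ≠ 0 → d o x ≤ t)
    (hCV : ∀ (t : ℕ) (x : V), 1 ≤ t →
      μ t x ≤ C * Real.exp (-((d o x : ℝ)) ^ 2 / (C * t)))
    (hball : ∀ t : ℕ, {x : V | d o x ≤ t}.Finite)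
    (hgrowth : Filter.Tendsto
      (fun t : ℕ => Real.log (Nat.card {x : V | d o x ≤ t}) / t)
      Filter.atTop (nhds 0))
    (α : ℝ) (hα : 0 < α) :
    Filter.Tendsto
      (fun t : ℕ => ∑' x : V, if α * t ≤ (d o x : ℝ) then μ t x else 0)
      Filter.atTop (nhds 0) := by
  have hbound : ∀ t : ℕ, 1 ≤ t → (∑' x : V, if α * t ≤ (d o x : ℝ) then μ t x else 0) ≤
      C * (Nat.card {x : V | d o x ≤ t} * Real.exp (-(α ^ 2 / C * t))) := by
    intro t ht
    have ht' : (0 : ℝ) < t := by exact_mod_cast ht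
    refine (tsum_ite_le_card_ball_mul (d o) (μ t) t _ (hsupp t) (hball t)
      (B := C * Real.exp (-(α ^ 2 * t / C))) (by positivity) fun x hx => (hCV t x ht).trans ?_).trans_eq (by ring_nf)
    gcongr
    exact neg_sq_div_mul_le_of_mul_le hC ht' hα.le hx
  have hlimit := (tendsto_mul_exp_neg_mul_of_log_div_tendsto_zero (fun t => by positivity)
    hgrowth (by positivity : 0 < α ^ 2 / C)).const_mul C
  rw [mul_zero] at hlimit
  refine tendsto_of_tendsto_of_tendsto_of_le_of_le' tendsto_const_nhds hlimit
    (Eventually.of_forall fun t => tsum_nonneg fun x => ?_)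
    (eventually_ge_atTop 1 |>.mono hbound)
  split_ifs
  exacts [hμpos t x, le_rfl]

/-- rate of escape. If the transition probabilities `μ t x = P[X_t = x | X_0 = o]`
satisfy the Carne–Varopoulos bound `μ t x ≤ C exp(-d(o,x)²/(Ct))`, the chain makes
nearest-neighbour steps (`μ t x ≠ 0 → d(o,x) ≤ t`), and the balls have subexponential
volume growth, then `P[d(o,X_t) ≥ α t] → 0` for every `α > 0`. -/
theorem escape_rate_subexponential_growth {V : Type*}
    (d : V → V → ℕ) (o : V) (μ : ℕ → V → ℝ) (C : ℝ) (hC : 0 < C)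
    (hμpos : ∀ t x, 0 ≤ μ t x)
    (hprob : ∀ t, ∑' x : V, μ t x = 1)
    (hsupp : ∀ t x, μ t x ≠ 0 → d o x ≤ t)
    (hCV : ∀ (t : ℕ) (x : V), 1 ≤ t →
      μ t x ≤ C * Real.exp (-((d o x : ℝ)) ^ 2 / (C * t)))
    (hball : ∀ t : ℕ, {x : V | d o x ≤ t}.Finite)
    (hgrowth : Filter.Tendsto
      (fun t : ℕ => Real.log (Nat.card {x : V | d o x ≤ t}) / t)
      Filter.atTop (nhds 0))
    (α : ℝ) (hα : 0 < α) :
    Filter.Tendsto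
      (fun t : ℕ => ∑' x : V, if α * t ≤ (d o x : ℝ) then μ t x else 0)
      Filter.atTop (nhds 0) :=
  escape_rate_subexponential_growth_general d o μ C hC hμpos hsupp hCV hball hgrowth α hα
end

section
/- Let V be a group generated (as a semigroup) by the finite sequence G = (g_1,...,g_K), and let μ be the uniform measure on G, defining the random walk with q(x,y) = (1/K)·#{i : g_i = x⁻¹y}. If there exist n ∈ ℕ* and an n-to-1 map σ : {1,...,nK} → {1,...,K} with g_{σ(1)}·g_{σ(2)}···g_{σ(nK)} = id, then the graph Γ = (V,q) is centered for the counting measure: there exist generalized cycles (γ_x)_{x∈V} of length nK and weights such that q(a,b) = Σ_x (1/(nK))·N((a,b), γ_x), where N((a,b),γ) counts occurrences of the edge (a,b) in γ. -/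
/-! The `j`-th edge of the translate `x · γ₁` is `(a, b)` exactly when `x = a g̃_j⁻¹` and the
`(j+1)`-st letter `g_{σ(j+1)}` equals `a⁻¹ b`. Hence, summed over all translates, the edge
`(a, b)` occurs once for each position of the relation carrying the letter `a⁻¹ b`, and since
`σ` is `n`-to-1 there are `n · #{i | g_i = a⁻¹ b}` such positions. -/

open scoped Classical

/-- Partial products `g̃ j = g_{σ(1)} ⋯ g_{σ(j)}` along the relation `σ`. -/
noncomputable def partialProd {V : Type*} [Group V] {K nK : ℕ}
    (G : Fin K → V) (σ : Fin nK → Fin K) (j : ℕ) : V :=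
  ((List.ofFn fun t => G (σ t)).take j).prod

open Finset

theorem translate_edge_iff {V : Type*} [Group V] {x p s a b : V} :
    x * p = a ∧ x * (p * s) = b ↔ x = a * p⁻¹ ∧ s = a⁻¹ * b := by
  constructor <;> rintro ⟨rfl, rfl⟩ <;> group <;> simp

theorem card_filter_comp_eq_mul {α β : Type*} [Fintype α] [Fintype β] [DecidableEq β]
    (σ : α → β) {n : ℕ} (hσ : ∀ i, #{j | σ j = i} = n) (P : β → Prop) :
    #{j | P (σ j)} = n * #{i | P i} := by
  rw [card_filter, card_filter, ← sum_fiberwise' univ σ fun i => if P i then 1 else 0, mul_sum]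
  simp only [sum_const, hσ, smul_eq_mul]

theorem hasSum_card_translate_edge {V : Type*} [Group V] {m : ℕ} (p : ℕ → V) (w : Fin m → V)
    (hp : ∀ j : Fin m, p (j + 1) = p j * w j) (a b : V) :
    HasSum (fun x : V => (#{j ∈ range m | x * p j = a ∧ x * p (j + 1) = b} : ℝ))
      #{j | w j = a⁻¹ * b} := by
  have hstep (j : Fin m) :
      HasSum (fun x : V => if x * p j = a ∧ x * p (j + 1) = b then (1 : ℝ) else 0)
        (if w j = a⁻¹ * b then 1 else 0) := by
    simp_rw [hp j, translate_edge_iff, ite_and]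
    exact hasSum_ite_eq _ _
  simpa only [card_filter, Nat.cast_sum, Nat.cast_ite, Nat.cast_one, Nat.cast_zero, sum_range]
    using hasSum_sum fun j _ => hstep j

theorem partialProd_succ {V : Type*} [Group V] {K m : ℕ} (G : Fin K → V) (σ : Fin m → Fin K)
    (j : Fin m) : partialProd G σ (j + 1) = partialProd G σ j * G (σ j) := by
  rw [partialProd, partialProd, List.prod_take_succ _ _ (by simp)]
  simp

theorem random_walk_centered_of_C1_general {V : Type*} [Group V]
    (K n : ℕ) (hn : 1 ≤ n)
    (G : Fin K → V)
    (σ : Fin (n * K) → Fin K)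
    (hσ : ∀ i : Fin K, (Finset.univ.filter fun j => σ j = i).card = n) :
    ∀ a b : V,
      ((Finset.univ.filter fun i : Fin K => G i = a⁻¹ * b).card : ℝ) / K =
        ∑' x : V, (1 / ((n : ℝ) * K)) *
          (((Finset.range (n * K)).filter fun j =>
              x * partialProd G σ j = a ∧ x * partialProd G σ (j + 1) = b).card : ℝ) := by
  intro a b
  rw [tsum_mul_left, (hasSum_card_translate_edge _ _ (partialProd_succ G σ) a b).tsum_eq,
    card_filter_comp_eq_mul σ hσ fun i => G i = a⁻¹ * b]
  have hn0 : (n : ℝ) ≠ 0 := Nat.cast_ne_zero.mpr (Nat.one_le_iff_ne_zero.mp hn)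
  push_cast
  field_simp

/-- Proposition 3.1: if `G = (g_1, ..., g_K)` generates `V` as a semigroup
and there are `n ≥ 1` and an `n`-to-1 map `σ` with `g_{σ(1)} ⋯ g_{σ(nK)} = id`, then the
random walk with kernel `q(a,b) = #{i : g_i = a⁻¹ b}/K` is centered for the counting
measure: `q(a,b) = ∑_{x ∈ V} (1/(nK)) · N((a,b), γ_x)`, where `γ_x` is the translate by
`x` of the generalized cycle of partial products, and `N(e,γ)` is the multiplicity of the
edge `e` in `γ`. -/
theorem random_walk_centered_of_C1 {V : Type*} [Group V]
    (K n : ℕ) (hK : 1 ≤ K) (hn : 1 ≤ n)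
    (G : Fin K → V)
    (hgen : ∀ x : V, x ∈ Subsemigroup.closure (Set.range G))
    (σ : Fin (n * K) → Fin K)
    (hσ : ∀ i : Fin K, (Finset.univ.filter fun j => σ j = i).card = n)
    (hprod : (List.ofFn fun j => G (σ j)).prod = 1) :
    ∀ a b : V,
      ((Finset.univ.filter fun i : Fin K => G i = a⁻¹ * b).card : ℝ) / K =
        ∑' x : V, (1 / ((n : ℝ) * K)) *
          (((Finset.range (n * K)).filter fun j =>
              x * partialProd G σ j = a ∧ x * partialProd G σ (j + 1) = b).card : ℝ) :=
  random_walk_centered_of_C1_general K n hn G σ hσ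
end

section
/- Vanishing entropy and Carne–Varopoulos bound imply zero speed: let (X_t) be a random walk on a finitely generated group V with step distribution μ of finite support, word metric d, and suppose there is a constant C with μ^t(x) ≤ C·e^{-d(id,x)²/(Ct)} for all x ∈ V, t ≥ 1. If the entropy h = lim_t -(1/t)·Σ_x μ^t(x) log μ^t(x) equals 0, then for every α > 0, P[d(id, X_t) ≥ αt] → 0 as t → ∞ (the speed L = lim (1/t)d(id,X_t) is 0). -/
/-!
Write `p = μ^t`. The Carne–Varopoulos bound says `-log p(x) ≥ -log C + d(x)²/(Ct)`, so
averaging against `p` gives `E[d(X_t)²] ≤ C t (log C + H(μ^t))`. By Chebyshev,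
`(αt)² P[d(X_t) ≥ αt] ≤ E[d(X_t)²]`, hence
`P[d(X_t) ≥ αt] ≤ (C/α²) (log C / t + H(μ^t)/t)`, and the right side tends to `0`
when the entropy `h = lim H(μ^t)/t` vanishes.
-/

open scoped Classical

/-- `t`-th convolution power of a probability measure `μ` on a group `V`
(the law of the random walk `X_t` started at the identity). -/
noncomputable def convPow {V : Type*} [Group V] (μ : V → ℝ) : ℕ → V → ℝ
  | 0 => fun x => if x = 1 then 1 else 0
  | (t + 1) => fun x => ∑' y : V, convPow μ t y * μ (y⁻¹ * x)

open Function Real Filter Topology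
open scoped Pointwise

section FiniteWeights

variable {α : Type*} {p : α → ℝ}

lemma summable_of_support_subset {f : α → ℝ} (hp : (support p).Finite)
    (hf : support f ⊆ support p) : Summable f :=
  summable_of_hasFiniteSupport (hp.subset hf)

lemma sq_mul_tsum_ite_le_tsum_mul_sq (hp : ∀ x, 0 ≤ p x) (hfin : (support p).Finite)
    (f : α → ℝ) {a : ℝ} (ha : 0 ≤ a) :
    a ^ 2 * ∑' x, (if a ≤ f x then p x else 0) ≤ ∑' x, p x * f x ^ 2 := by
  rw [← tsum_mul_left]
  refine Summable.tsum_le_tsum (fun x => ?_) (summable_of_support_subset hfin ?_)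
    (summable_of_support_subset hfin (support_mul_subset_left _ _))
  · split_ifs with hx
    · rw [mul_comm]
      exact mul_le_mul_of_nonneg_left (pow_le_pow_left₀ ha hx 2) (hp x)
    · rw [mul_zero]
      exact mul_nonneg (hp x) (sq_nonneg _)
  · intro x hx
    rw [mem_support] at hx ⊢
    intro h0
    simp [h0] at hx

lemma mul_sq_le_of_le_mul_exp {q r C s : ℝ} (hC : 0 < C) (hs : 0 < s) (hq : 0 ≤ q)
    (h : q ≤ C * exp (-r ^ 2 / (C * s))) :
    q * r ^ 2 ≤ C * s * (q * log C - q * log q) := by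
  rcases hq.eq_or_lt with rfl | hq
  · simp
  have hlog : log q ≤ log C - r ^ 2 / (C * s) := by
    calc log q ≤ log (C * exp (-r ^ 2 / (C * s))) := log_le_log hq h
      _ = log C - r ^ 2 / (C * s) := by
        rw [log_mul hC.ne' (exp_ne_zero _), log_exp, neg_div, sub_eq_add_neg]
  have hr : r ^ 2 ≤ C * s * (log C - log q) := by
    rw [← div_le_iff₀' (by positivity)]
    linarith
  calc q * r ^ 2 ≤ q * (C * s * (log C - log q)) := mul_le_mul_of_nonneg_left hr hq.le
    _ = C * s * (q * log C - q * log q) := by ring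

lemma tsum_mul_sq_le_of_le_mul_exp (hp : ∀ x, 0 ≤ p x) (hfin : (support p).Finite)
    (hsum : ∑' x, p x = 1) {C s : ℝ} (hC : 0 < C) (hs : 0 < s) (f : α → ℝ)
    (h : ∀ x, p x ≤ C * exp (-f x ^ 2 / (C * s))) :
    ∑' x, p x * f x ^ 2 ≤ C * s * (log C - ∑' x, p x * log (p x)) := by
  have hsum_log : Summable fun x => p x * log (p x) :=
    summable_of_support_subset hfin (support_mul_subset_left _ _)
  have hsum_const : Summable fun x => p x * log C :=
    summable_of_support_subset hfin (support_mul_subset_left _ _)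
  calc ∑' x, p x * f x ^ 2 ≤ ∑' x, C * s * (p x * log C - p x * log (p x)) :=
        Summable.tsum_le_tsum (fun x => mul_sq_le_of_le_mul_exp hC hs (hp x) (h x))
          (summable_of_support_subset hfin (support_mul_subset_left _ _))
          ((hsum_const.sub hsum_log).mul_left _)
    _ = C * s * (log C - ∑' x, p x * log (p x)) := by
        rw [tsum_mul_left, hsum_const.tsum_sub hsum_log, tsum_mul_right, hsum, one_mul]

lemma tsum_ite_le_of_le_mul_exp (hp : ∀ x, 0 ≤ p x) (hfin : (support p).Finite)
    (hsum : ∑' x, p x = 1) {C s : ℝ} (hC : 0 < C) (hs : 0 < s) (f : α → ℝ)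
    (h : ∀ x, p x ≤ C * exp (-f x ^ 2 / (C * s))) {a : ℝ} (ha : 0 < a) :
    ∑' x, (if a ≤ f x then p x else 0) ≤ C * s * (log C - ∑' x, p x * log (p x)) / a ^ 2 := by
  rw [le_div_iff₀' (by positivity)]
  exact (sq_mul_tsum_ite_le_tsum_mul_sq hp hfin f ha.le).trans
    (tsum_mul_sq_le_of_le_mul_exp hp hfin hsum hC hs f h)

end FiniteWeights

section ConvPow

variable {V : Type*} [Group V] {μ : V → ℝ}

lemma convPow_nonneg (hμ : ∀ x, 0 ≤ μ x) (t : ℕ) (x : V) : 0 ≤ convPow μ t x := by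
  induction t generalizing x with
  | zero => simp only [convPow]; split <;> norm_num
  | succ t ih => exact tsum_nonneg fun y => mul_nonneg (ih y) (hμ _)

lemma support_convPow_succ_subset (t : ℕ) :
    support (convPow μ (t + 1)) ⊆ support (convPow μ t) * support μ := by
  intro x hx
  obtain ⟨y, hy⟩ : ∃ y, convPow μ t y * μ (y⁻¹ * x) ≠ 0 := by
    by_contra! h
    simp [convPow, h] at hx
  exact ⟨y, left_ne_zero_of_mul hy, y⁻¹ * x, right_ne_zero_of_mul hy, mul_inv_cancel_left y x⟩

lemma finite_support_convPow (hμfin : (support μ).Finite) (t : ℕ) :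
    (support (convPow μ t)).Finite := by
  induction t with
  | zero =>
    refine (Set.finite_singleton (1 : V)).subset fun x hx => ?_
    by_contra h
    simp_all [convPow]
  | succ t ih => exact (ih.mul hμfin).subset (support_convPow_succ_subset t)

lemma tsum_convPow (hμfin : (support μ).Finite) (hμprob : ∑' x, μ x = 1) (t : ℕ) :
    ∑' x, convPow μ t x = 1 := by
  induction t with
  | zero => simp only [convPow]; exact tsum_ite_eq 1 1
  | succ t ih =>
    have hfin := finite_support_convPow hμfin t
    have hjoint : Summable (uncurry fun y x => convPow μ t y * μ (y⁻¹ * x)) := by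
      refine summable_of_hasFiniteSupport ((hfin.prod (hfin.mul hμfin)).subset ?_)
      rintro ⟨y, x⟩ hyx
      exact ⟨left_ne_zero_of_mul hyx,
        y, left_ne_zero_of_mul hyx, y⁻¹ * x, right_ne_zero_of_mul hyx, mul_inv_cancel_left y x⟩
    calc ∑' x, convPow μ (t + 1) x = ∑' y, ∑' x, convPow μ t y * μ (y⁻¹ * x) := hjoint.tsum_comm
      _ = ∑' y, convPow μ t y * ∑' x, μ (Equiv.mulLeft y⁻¹ x) := by simp only [tsum_mul_left]; rfl
      _ = 1 := by simp only [Equiv.tsum_eq, hμprob, mul_one, ih]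

end ConvPow

theorem zero_entropy_implies_zero_speed_general {V : Type*} [Group V]
    (μ : V → ℝ) (d : V → ℕ) (C : ℝ) (hC : 0 < C)
    (hμ : ∀ x, 0 ≤ μ x) (hμfin : (Function.support μ).Finite)
    (hμprob : ∑' x : V, μ x = 1)
    (hCV : ∀ (t : ℕ) (x : V), 1 ≤ t →
      convPow μ t x ≤ C * Real.exp (-((d x : ℝ)) ^ 2 / (C * t)))
    (hent : Filter.Tendsto
      (fun t : ℕ => -(1 / (t : ℝ)) * ∑' x : V, convPow μ t x * Real.log (convPow μ t x))
      Filter.atTop (nhds 0)) :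
    ∀ α : ℝ, 0 < α →
      Filter.Tendsto
        (fun t : ℕ => ∑' x : V, if α * t ≤ (d x : ℝ) then convPow μ t x else 0)
        Filter.atTop (nhds 0) := by
  intro α hα
  set H : ℕ → ℝ := fun t => -(1 / (t : ℝ)) * ∑' x, convPow μ t x * log (convPow μ t x)
  have hbound : ∀ᶠ t : ℕ in atTop, (∑' x, if α * t ≤ (d x : ℝ) then convPow μ t x else 0)
      ≤ C / α ^ 2 * (log C * (1 / (t : ℝ)) + H t) := by
    filter_upwards [eventually_ge_atTop 1] with t ht
    have ht0 : (0 : ℝ) < t := by exact_mod_cast ht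
    calc _ ≤ C * t * (log C - ∑' x, convPow μ t x * log (convPow μ t x)) / (α * t) ^ 2 :=
          tsum_ite_le_of_le_mul_exp (convPow_nonneg hμ t) (finite_support_convPow hμfin t)
            (tsum_convPow hμfin hμprob t) hC ht0 _ (fun x => hCV t x ht) (by positivity)
      _ = C / α ^ 2 * (log C * (1 / (t : ℝ)) + H t) := by simp only [H]; field_simp; ring
  have hlim : Tendsto (fun t : ℕ => C / α ^ 2 * (log C * (1 / (t : ℝ)) + H t)) atTop (𝓝 0) := by
    simpa using ((tendsto_one_div_atTop_nhds_zero_nat.const_mul (log C)).add hent).const_mul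
      (C / α ^ 2)
  refine squeeze_zero' (Eventually.of_forall fun t => tsum_nonneg fun x => ?_) hbound hlim
  split_ifs
  exacts [convPow_nonneg hμ t x, le_rfl]

/-- vanishing entropy plus the Carne–Varopoulos bound imply zero speed.
Let `μ` be a finitely supported step distribution on a group `V`, `d x` the word distance
from the identity to `x` (so that `d x ≤ t` on the support of `μ^t`), and suppose
`μ^t(x) ≤ C exp(-d(x)²/(Ct))`. If the entropy
`h = lim_t -(1/t) ∑_x μ^t(x) log μ^t(x)` equals `0`, then for every `α > 0`,
`P[d(id,X_t) ≥ α t] → 0`, i.e. the speed is `0`. -/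
theorem zero_entropy_implies_zero_speed {V : Type*} [Group V]
    (μ : V → ℝ) (d : V → ℕ) (C : ℝ) (hC : 0 < C)
    (hμ : ∀ x, 0 ≤ μ x) (hμfin : (Function.support μ).Finite)
    (hμprob : ∑' x : V, μ x = 1)
    (hd : ∀ (t : ℕ) (x : V), convPow μ t x ≠ 0 → (d x : ℝ) ≤ t)
    (hCV : ∀ (t : ℕ) (x : V), 1 ≤ t →
      convPow μ t x ≤ C * Real.exp (-((d x : ℝ)) ^ 2 / (C * t)))
    (hent : Filter.Tendsto
      (fun t : ℕ => -(1 / (t : ℝ)) * ∑' x : V, convPow μ t x * Real.log (convPow μ t x))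
      Filter.atTop (nhds 0)) :
    ∀ α : ℝ, 0 < α →
      Filter.Tendsto
        (fun t : ℕ => ∑' x : V, if α * t ≤ (d x : ℝ) then convPow μ t x else 0)
        Filter.atTop (nhds 0) :=
  zero_entropy_implies_zero_speed_general μ d C hC hμ hμfin hμprob hCV hent
end
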